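/- arXiv:1910.08843 — 3 statements merged into one kernel-verified Lean document; each statement's English description precedes it below -/
import Mathlib

section
/- For every integer n ≥ 3, the symmetric group S_n has a string C-group representation of rank n−1, and every string C-group representation of S_n has rank at most n−1; that is, the string C-rank of S_n equals n−1. -/
/-!
Lower bound: the adjacent transpositions `sᵢ = (i i+1)` work. The subgroup generated by
`{sᵢ | i ∈ S}` is the Young subgroup of permutations preserving every initial segment `[0, j]`
with `j ∉ S`: a nontrivial element of it has a descent at some `i`, necessarily `i ∈ S`, and
multiplying by `sᵢ` removes an inversion. These Young subgroups intersect as their index sets do.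

Upper bound: if an abelian group `A` acts faithfully on a finite set, the sum `sopfr |A|` of the
prime factors of `|A|` (with multiplicity) is at most the number of moved points (split off an
orbit; its stabilizer fixes the orbit pointwise). In a string C-group `(ρᵢ)` of rank `r ≥ n` in
`Sₙ`, the intersection property makes commuting subgroups generated by disjoint sets of generators
independent. For `n` odd, `⟨ρ₀⟩, ⟨ρ₂⟩, …, ⟨ρₙ₋₁⟩` then generate an abelian group `A` of order
`2^((n+1)/2)`; for `n` even, an abelian subgroup of order `≥ 3` of `⟨ρ₀, ρ₁⟩` together with
`⟨ρ₃⟩, …, ⟨ρₙ₋₁⟩` generate such an `A`. Either way `sopfr |A| > n`.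
-/

/-- A string C-group representation of rank `n` of a group `G`: a family of `n`
involutions generating `G`, satisfying the commuting (string) property and the
intersection property. -/
def IsStringCGroupRep {G : Type*} [Group G] {n : ℕ} (ρ : Fin n → G) : Prop :=
  (∀ i, orderOf (ρ i) = 2) ∧
  Subgroup.closure (Set.range ρ) = ⊤ ∧
  (∀ i j : Fin n, i.val + 1 < j.val → Commute (ρ i) (ρ j)) ∧
  (∀ I J : Set (Fin n),
    Subgroup.closure (ρ '' I) ⊓ Subgroup.closure (ρ '' J) = Subgroup.closure (ρ '' (I ∩ J)))

open Function Subgroup MulAction Pointwise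
open Equiv (Perm swap swap_apply_def)

namespace Nat

def sopfr (n : ℕ) : ℕ := n.primeFactorsList.sum

@[simp] lemma sopfr_zero : sopfr 0 = 0 := by simp [sopfr]

@[simp] lemma sopfr_one : sopfr 1 = 0 := by simp [sopfr]

lemma sopfr_prime {p : ℕ} (hp : p.Prime) : sopfr p = p := by
  simp [sopfr, primeFactorsList_prime hp]

lemma sopfr_mul {a b : ℕ} (ha : a ≠ 0) (hb : b ≠ 0) : sopfr (a * b) = sopfr a + sopfr b := by
  rw [sopfr, (perm_primeFactorsList_mul ha hb).sum_eq, List.sum_append, sopfr, sopfr]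

lemma sopfr_prod {ι : Type*} (s : Finset ι) {f : ι → ℕ} (hf : ∀ i ∈ s, f i ≠ 0) :
    sopfr (∏ i ∈ s, f i) = ∑ i ∈ s, sopfr (f i) := by
  classical
  induction s using Finset.induction_on with
  | empty => simp
  | insert i s hi ih =>
    rw [Finset.prod_insert hi, Finset.sum_insert hi,
      sopfr_mul (hf i (by simp)) (Finset.prod_ne_zero_iff.2 fun j hj => hf j (by simp [hj])),
      ih fun j hj => hf j (by simp [hj])]

lemma sopfr_le (n : ℕ) : sopfr n ≤ n := by
  induction n using Nat.recOnMul with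
  | zero => simp
  | one => simp
  | prime p hp => rw [sopfr_prime hp]
  | mul a b ha hb =>
    rcases Nat.lt_or_ge a 2 with h | h
    · interval_cases a <;> simp [hb]
    rcases Nat.lt_or_ge b 2 with h' | h'
    · interval_cases b <;> simp [ha]
    rw [sopfr_mul (by omega) (by omega)]
    nlinarith

lemma two_le_sopfr {n : ℕ} (hn : 2 ≤ n) : 2 ≤ sopfr n :=
  (minFac_prime (by omega)).two_le.trans <| List.le_sum_of_mem <|
    (mem_primeFactorsList (by omega)).2 ⟨minFac_prime (by omega), minFac_dvd n⟩

lemma three_le_sopfr {n : ℕ} (hn : 3 ≤ n) : 3 ≤ sopfr n := by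
  have hp := minFac_prime (n := n) (by omega)
  obtain ⟨m, hm⟩ := minFac_dvd n
  rcases Nat.lt_or_ge m 2 with h | h
  · interval_cases m
    · omega
    · rw [mul_one] at hm
      rwa [hm, sopfr_prime hp, ← hm]
  · rw [hm, sopfr_mul hp.ne_zero (by omega), sopfr_prime hp]
    have := hp.two_le
    have := two_le_sopfr h
    omega

end Nat

theorem sopfr_card_le_ncard_compl_fixedPoints {G α : Type*} [Group G] [IsMulCommutative G]
    [Finite G] [MulAction G α] [FaithfulSMul G α] [Finite α] :
    (Nat.card G).sopfr ≤ (fixedPoints G α)ᶜ.ncard := by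
  induction hN : Nat.card G using Nat.strong_induction_on generalizing G with
  | _ N ih =>
  subst hN
  rcases subsingleton_or_nontrivial G with _ | _
  · simp
  obtain ⟨g, hg⟩ := exists_ne (1 : G)
  obtain ⟨a, ha⟩ : ∃ a : α, g • a ≠ a := by
    by_contra! h
    exact hg (eq_of_smul_eq_smul fun x => by rw [h, one_smul])
  set S := stabilizer G a
  set O := orbit G a
  have hcard : Nat.card G = O.ncard * Nat.card S := by
    rw [← index_stabilizer, index_mul_card]
  have hO : 2 ≤ O.ncard :=
    (Set.one_lt_ncard_iff (Set.toFinite O)).2 ⟨g • a, a, mem_orbit a g, mem_orbit_self a, ha⟩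
  have hS : Nat.card S ≠ 0 := Nat.card_pos.ne'
  -- `G` is commutative, so the stabilizer of `a` fixes the whole orbit of `a`
  have hdisj : Disjoint O (fixedPoints S α)ᶜ := by
    rw [Set.disjoint_compl_right_iff_subset]
    rintro _ ⟨h, rfl⟩ s
    change (s : G) • h • a = h • a
    rw [smul_smul, mul_comm', ← smul_smul, s.2]
  have hO_moved : O ⊆ (fixedPoints G α)ᶜ := by
    rintro _ ⟨h, rfl⟩ hfix
    apply ha
    apply MulAction.injective h
    change h • g • a = h • a
    rw [smul_smul, mul_comm', ← smul_smul]
    exact hfix g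
  have hS_moved : (fixedPoints S α)ᶜ ⊆ (fixedPoints G α)ᶜ :=
    Set.compl_subset_compl.2 fun x hx s => hx s
  calc (Nat.card G).sopfr = O.ncard.sopfr + (Nat.card S).sopfr := by
        rw [hcard, Nat.sopfr_mul (by omega) hS]
    _ ≤ O.ncard + (fixedPoints S α)ᶜ.ncard :=
        add_le_add (Nat.sopfr_le _) (ih _ (by rw [hcard]; nlinarith [Nat.pos_of_ne_zero hS]) rfl)
    _ = (O ∪ (fixedPoints S α)ᶜ).ncard := (Set.ncard_union_eq hdisj).symm
    _ ≤ (fixedPoints G α)ᶜ.ncard := Set.ncard_le_ncard (Set.union_subset hO_moved hS_moved)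

section Group

variable {G : Type*} [Group G]

theorem card_iSup_eq_prod {κ : Type*} [Fintype κ] {H : κ → Subgroup G}
    (hcomm : Pairwise fun a b => H a ≤ centralizer (H b)) (hind : iSupIndep H) :
    Nat.card ↥(⨆ a, H a) = ∏ a, Nat.card (H a) := by
  have hcomm' : Pairwise fun a b => ∀ x y : G, x ∈ H a → y ∈ H b → Commute x y :=
    fun a b hab x y hx hy => (mem_centralizer_iff.1 (hcomm hab hx) y hy).symm
  rw [← noncommPiCoprod_range (hcomm := hcomm'), ← Nat.card_pi,
    Nat.card_congr (MonoidHom.ofInjective (injective_noncommPiCoprod_of_iSupIndep hind)).toEquiv]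

theorem isMulCommutative_iSup {κ : Type*} {H : κ → Subgroup G} [∀ a, IsMulCommutative (H a)]
    (hcomm : Pairwise fun a b => H a ≤ centralizer (H b)) : IsMulCommutative ↥(⨆ a, H a) := by
  refine le_centralizer_iff_isMulCommutative.1 (iSup_le fun a => le_centralizer_iff.1 ?_)
  refine iSup_le fun b => ?_
  rcases eq_or_ne a b with rfl | hab
  · exact le_centralizer_iff_isMulCommutative.2 inferInstance
  · exact hcomm hab.symm

theorem exists_isMulCommutative_le_closure_pair [Finite G] {a b : G}
    (ha : orderOf a = 2) (hb : orderOf b = 2) (hab : a ≠ b) :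
    ∃ K : Subgroup G, IsMulCommutative K ∧ K ≤ closure {a, b} ∧ 3 ≤ Nat.card K := by
  have haa : a * a = 1 := by rw [← sq, ← ha, pow_orderOf_eq_one]
  have hbb : b * b = 1 := by rw [← sq, ← hb, pow_orderOf_eq_one]
  by_cases hc : Commute a b
  · have ha1 : a ≠ 1 := by rintro rfl; simp at ha
    have hb1 : b ≠ 1 := by rintro rfl; simp at hb
    refine ⟨closure {a, b}, le_centralizer_iff_isMulCommutative.1 ?_, le_rfl, ?_⟩
    · rw [centralizer_closure, closure_le]
      rintro _ (rfl | rfl) <;> rw [SetLike.mem_coe, mem_centralizer_iff] <;>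
        rintro _ (rfl | rfl) <;> first | rfl | exact hc.eq | exact hc.eq.symm
    · calc 3 = ({1, a, b} : Set G).ncard := by
            rw [Set.ncard_insert_of_notMem (by simp [ha1.symm, hb1.symm]), Set.ncard_pair hab]
        _ ≤ (closure {a, b} : Set G).ncard :=
            Set.ncard_le_ncard (Set.insert_subset (one_mem _) subset_closure) (Set.toFinite _)
        _ = Nat.card (closure {a, b}) := Nat.card_coe_set_eq _
  · refine ⟨zpowers (a * b), inferInstance,
      zpowers_le.2 (mul_mem (subset_closure (by simp)) (subset_closure (by simp))), ?_⟩
    rw [Nat.card_zpowers]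
    have h0 := (orderOf_pos (a * b)).ne'
    have h1 : orderOf (a * b) ≠ 1 := fun h => hab <| by
      rw [← mul_one a, ← hbb, ← mul_assoc, orderOf_eq_one_iff.1 h, one_mul]
    have h2 : orderOf (a * b) ≠ 2 := fun h => hc <| by
      have habab : a * b * (a * b) = 1 := by rw [← sq, ← h, pow_orderOf_eq_one]
      calc a * b = a * (a * b * (a * b)) * b := by rw [habab, mul_one]
        _ = (a * a) * b * a * (b * b) := by group
        _ = b * a := by rw [haa, hbb, one_mul, mul_one]
    omega

variable {ι : Type*}

def IntersectionProperty (ρ : ι → G) : Prop :=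
  ∀ I J : Set ι, closure (ρ '' I) ⊓ closure (ρ '' J) = closure (ρ '' (I ∩ J))

theorem IntersectionProperty.iSupIndep {ρ : ι → G} (hρ : IntersectionProperty ρ) {κ : Type*}
    {H : κ → Subgroup G} {U : κ → Set ι} (hU : Pairwise (Disjoint on U))
    (hHU : ∀ a, H a ≤ closure (ρ '' U a)) : iSupIndep H := by
  intro a
  rw [disjoint_iff, eq_bot_iff]
  have hrest : ⨆ (b) (_ : b ≠ a), H b ≤ closure (ρ '' ⋃ (b) (_ : b ≠ a), U b) :=
    iSup₂_le fun b hb =>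
      (hHU b).trans (closure_mono (Set.image_mono (Set.subset_biUnion_of_mem (u := U) hb)))
  have hempty : U a ∩ ⋃ (b) (_ : b ≠ a), U b = ∅ :=
    (Set.disjoint_iUnion₂_right.2 fun b hb => hU hb.symm).inter_eq
  calc H a ⊓ ⨆ (b) (_ : b ≠ a), H b
      ≤ closure (ρ '' U a) ⊓ closure (ρ '' ⋃ (b) (_ : b ≠ a), U b) := inf_le_inf (hHU a) hrest
    _ = ⊥ := by rw [hρ, hempty, Set.image_empty, Subgroup.closure_empty]

end Group

theorem IntersectionProperty.sum_sopfr_card_le {ι α : Type*} [Finite α] {ρ : ι → Perm α}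
    (hρ : IntersectionProperty ρ) {κ : Type*} [Fintype κ] {H : κ → Subgroup (Perm α)}
    (hH : ∀ a, IsMulCommutative (H a)) (hcomm : Pairwise fun a b => H a ≤ centralizer (H b))
    {U : κ → Set ι} (hU : Pairwise (Disjoint on U)) (hHU : ∀ a, H a ≤ closure (ρ '' U a)) :
    ∑ a, (Nat.card (H a)).sopfr ≤ Nat.card α := by
  have := isMulCommutative_iSup hcomm
  calc ∑ a, (Nat.card (H a)).sopfr = (∏ a, Nat.card (H a)).sopfr :=
        (Nat.sopfr_prod _ fun a _ => Nat.card_pos.ne').symm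
    _ = (Nat.card ↥(⨆ a, H a)).sopfr := by rw [card_iSup_eq_prod hcomm (hρ.iSupIndep hU hHU)]
    _ ≤ (fixedPoints (↥(⨆ a, H a)) α)ᶜ.ncard := sopfr_card_le_ncard_compl_fixedPoints
    _ ≤ Nat.card α := Set.ncard_le_card _

lemma Equiv.Perm.eq_one_of_strictMono {α : Type*} [LinearOrder α] [WellFoundedLT α] {π : Perm α}
    (hπ : StrictMono π) : π = 1 := by
  have := Subsingleton.elim (hπ.orderIsoOfSurjective π π.surjective) (OrderIso.refl α)
  exact Equiv.ext fun x => DFunLike.congr_fun this x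

section AdjacentSwaps

variable {m : ℕ}

def adjSwap (i : Fin m) : Perm (Fin (m + 1)) := swap i.castSucc i.succ

lemma orderOf_adjSwap (i : Fin m) : orderOf (adjSwap i) = 2 :=
  Perm.IsSwap.orderOf ⟨_, _, Fin.castSucc_lt_succ.ne, rfl⟩

lemma adjSwap_commute {i j : Fin m} (hij : i.val + 1 < j.val) :
    Commute (adjSwap i) (adjSwap j) := by
  refine Perm.Disjoint.commute fun x => ?_
  simp only [adjSwap, swap_apply_def, Fin.ext_iff, Fin.val_castSucc, Fin.val_succ]
  split_ifs <;> omega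

lemma adjSwap_lt_adjSwap {i : Fin m} {x y : Fin (m + 1)} (hxy : x < y)
    (hne : ¬(x = i.castSucc ∧ y = i.succ)) : adjSwap i x < adjSwap i y := by
  simp only [adjSwap, swap_apply_def]
  simp only [Fin.lt_def, Fin.ext_iff, Fin.val_castSucc, Fin.val_succ] at *
  split_ifs <;> simp_all <;> omega

lemma exists_adjSwap_descent {π : Perm (Fin (m + 1))} (hπ : π ≠ 1) :
    ∃ i : Fin m, π i.succ < π i.castSucc := by
  by_contra! h
  exact hπ (Perm.eq_one_of_strictMono (Fin.strictMono_iff_lt_succ.2 fun i =>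
    (h i).lt_of_ne (π.injective.ne Fin.castSucc_lt_succ.ne)))

def inversions {n : ℕ} (π : Perm (Fin n)) : Finset (Fin n × Fin n) :=
  {p | p.1 < p.2 ∧ π p.2 < π p.1}

@[simp] lemma mem_inversions {n : ℕ} {π : Perm (Fin n)} {p : Fin n × Fin n} :
    p ∈ inversions π ↔ p.1 < p.2 ∧ π p.2 < π p.1 := by
  simp [inversions]

lemma card_inversions_mul_adjSwap_lt {π : Perm (Fin (m + 1))} {i : Fin m}
    (hi : π i.succ < π i.castSucc) :
    (inversions (π * adjSwap i)).card < (inversions π).card := by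
  have hmem : (i.castSucc, i.succ) ∈ inversions π := by simp [hi]
  refine lt_of_le_of_lt ?_ (Finset.card_erase_lt_of_mem hmem)
  refine Finset.card_le_card_of_injOn (fun p => (adjSwap i p.1, adjSwap i p.2)) ?_ ?_
  · rintro ⟨x, y⟩ hp
    rw [Finset.mem_coe, mem_inversions] at hp
    have hne : ¬(x = i.castSucc ∧ y = i.succ) := by
      rintro ⟨rfl, rfl⟩
      simp [adjSwap, hi.not_gt] at hp
    have hlt := adjSwap_lt_adjSwap hp.1 hne
    refine Finset.mem_erase.2 ⟨fun h => ?_, mem_inversions.2 ⟨hlt, by simpa using hp.2⟩⟩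
    have hx : x = i.succ := by simpa [adjSwap] using congrArg (adjSwap i) (Prod.ext_iff.1 h).1
    have hy : y = i.castSucc := by simpa [adjSwap] using congrArg (adjSwap i) (Prod.ext_iff.1 h).2
    exact (hx ▸ hy ▸ hp.1).not_gt Fin.castSucc_lt_succ
  · rintro ⟨x, y⟩ - ⟨x', y'⟩ - h
    simpa using h

/-- The Young subgroup of `Perm (Fin (m + 1))` whose blocks are cut at the points `j ∉ S`. -/
def youngSubgroup (S : Set (Fin m)) : Subgroup (Perm (Fin (m + 1))) :=
  ⨅ j ∈ Sᶜ, stabilizer (Perm (Fin (m + 1))) (Set.Iic j.castSucc)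

lemma mem_youngSubgroup {S : Set (Fin m)} {π : Perm (Fin (m + 1))} :
    π ∈ youngSubgroup S ↔ ∀ j ∉ S, ∀ x, π x ≤ j.castSucc ↔ x ≤ j.castSucc := by
  simp only [youngSubgroup, mem_iInf, mem_stabilizer_set, Perm.smul_def, Set.mem_Iic,
    Set.mem_compl_iff]

lemma youngSubgroup_inf (I J : Set (Fin m)) :
    youngSubgroup I ⊓ youngSubgroup J = youngSubgroup (I ∩ J) := by
  rw [youngSubgroup, youngSubgroup, youngSubgroup, Set.compl_inter, iInf_union]

lemma youngSubgroup_univ : youngSubgroup (Set.univ : Set (Fin m)) = ⊤ := by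
  simp [youngSubgroup]

lemma adjSwap_mem_youngSubgroup {S : Set (Fin m)} {i : Fin m} (hi : i ∈ S) :
    adjSwap i ∈ youngSubgroup S := by
  refine mem_youngSubgroup.2 fun j hj x => ?_
  have hij : i.val ≠ j.val := fun h => hj (Fin.ext h ▸ hi)
  clear hi hj
  simp only [adjSwap, swap_apply_def]
  split_ifs <;> simp only [Fin.ext_iff, Fin.le_def, Fin.val_castSucc, Fin.val_succ] at * <;> omega

lemma closure_adjSwap_image (S : Set (Fin m)) : closure (adjSwap '' S) = youngSubgroup S := by
  refine le_antisymm (closure_le _ |>.2 ?_) fun π hπ => ?_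
  · rintro _ ⟨i, hi, rfl⟩
    exact adjSwap_mem_youngSubgroup hi
  induction hN : (inversions π).card using Nat.strong_induction_on generalizing π with
  | _ N ih =>
  rcases eq_or_ne π 1 with rfl | hπ1
  · exact one_mem _
  obtain ⟨i, hi⟩ := exists_adjSwap_descent hπ1
  -- a descent at `i ∉ S` would move `i + 1` into the block `[0, i]`
  have hiS : i ∈ S := by
    by_contra hiS
    have h := mem_youngSubgroup.1 hπ i hiS
    exact (Fin.castSucc_lt_succ (i := i)).not_ge <|
      (h i.succ).1 (((h i.castSucc).2 le_rfl).trans' hi.le)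
  have hs : adjSwap i ∈ closure (adjSwap '' S) := subset_closure ⟨i, hiS, rfl⟩
  have hπs := ih _ (hN ▸ card_inversions_mul_adjSwap_lt hi) _
    (mul_mem hπ (adjSwap_mem_youngSubgroup hiS)) rfl
  simpa [adjSwap, mul_assoc] using mul_mem hπs hs

theorem isStringCGroupRep_adjSwap : IsStringCGroupRep (adjSwap (m := m)) := by
  refine ⟨orderOf_adjSwap, ?_, fun i j h => adjSwap_commute h, fun I J => ?_⟩
  · rw [← Set.image_univ, closure_adjSwap_image, youngSubgroup_univ]
  · rw [closure_adjSwap_image, closure_adjSwap_image, closure_adjSwap_image, youngSubgroup_inf]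

end AdjacentSwaps

section StringCGroup

variable {r : ℕ}

lemma closure_image_le_centralizer {G : Type*} [Group G] {ρ : Fin r → G}
    (hcomm : ∀ i j : Fin r, i.val + 1 < j.val → Commute (ρ i) (ρ j)) {I J : Set (Fin r)}
    (hIJ : ∀ i ∈ I, ∀ j ∈ J, i.val + 1 < j.val ∨ j.val + 1 < i.val) :
    closure (ρ '' I) ≤ centralizer (closure (ρ '' J)) := by
  rw [centralizer_closure, closure_le]
  rintro _ ⟨i, hi, rfl⟩
  rw [SetLike.mem_coe, mem_centralizer_iff]
  rintro _ ⟨j, hj, rfl⟩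
  rcases hIJ i hi j hj with h | h
  · exact (hcomm i j h).eq.symm
  · exact (hcomm j i h).eq

lemma IsStringCGroupRep.injective {G : Type*} [Group G] {ρ : Fin r → G}
    (hρ : IsStringCGroupRep ρ) : Injective ρ := by
  intro i j hij
  by_contra hne
  have hi : ρ i ∈ closure (ρ '' {i}) ⊓ closure (ρ '' {j}) :=
    ⟨subset_closure ⟨i, rfl, rfl⟩, hij ▸ subset_closure ⟨j, rfl, rfl⟩⟩
  rw [hρ.2.2.2, (Set.disjoint_singleton.2 hne).inter_eq, Set.image_empty, Subgroup.closure_empty,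
    mem_bot] at hi
  simpa [hi] using hρ.1 i

lemma IsStringCGroupRep.sopfr_card_add_le {α : Type*} [Finite α] {ρ : Fin r → Perm α}
    (hρ : IsStringCGroupRep ρ) {K : Subgroup (Perm α)} [IsMulCommutative K] {s k : ℕ}
    (hK : K ≤ closure (ρ '' {i | i.val < s})) (hsk : s + 2 * k ≤ r) :
    (Nat.card K).sopfr + 2 * k ≤ Nat.card α := by
  obtain ⟨hord, -, hcomm, hint⟩ := hρ
  -- `K` together with `⟨ρ (s + 1)⟩, ⟨ρ (s + 3)⟩, …, ⟨ρ (s + 2k - 1)⟩`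
  let idx (a : Fin k) : Fin r := ⟨s + 2 * a + 1, by omega⟩
  let U (o : Option (Fin k)) : Set (Fin r) := o.elim {i | i.val < s} fun a => {idx a}
  let H (o : Option (Fin k)) : Subgroup (Perm α) := o.elim K fun a => zpowers (ρ (idx a))
  have hgap : Pairwise fun o o' =>
      ∀ i ∈ U o, ∀ j ∈ U o', i.val + 1 < j.val ∨ j.val + 1 < i.val := by
    rintro (_ | a) (_ | b) hab i hi j hj <;>
      simp only [U, idx, Option.elim, Set.mem_ofPred_eq, Set.mem_singleton_iff, Fin.ext_iff]
        at hi hj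
    · exact absurd rfl hab
    · omega
    · omega
    · have : a.val ≠ b.val := fun h => hab (congrArg some (Fin.ext h))
      omega
  have hHU (o : Option (Fin k)) : H o ≤ closure (ρ '' U o) := by
    rcases o with _ | a
    · exact hK
    · simp [H, U, zpowers_eq_closure]
  have hH (o : Option (Fin k)) : IsMulCommutative (H o) := by
    rcases o with _ | a
    exacts [inferInstanceAs (IsMulCommutative K), inferInstanceAs (IsMulCommutative (zpowers _))]
  have hsum := IntersectionProperty.sum_sopfr_card_le hint hH
    (fun o o' h => (hHU o).trans <| (closure_image_le_centralizer hcomm (hgap h)).trans <|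
      centralizer_le (hHU o'))
    (fun o o' h => Set.disjoint_left.2 fun i hi hi' => by have := hgap h i hi i hi'; omega) hHU
  simpa [H, Fintype.sum_option, Nat.card_zpowers, hord, Nat.sopfr_prime Nat.prime_two, mul_comm]
    using hsum

theorem IsStringCGroupRep.rank_le_sub_one {n : ℕ} {ρ : Fin r → Perm (Fin n)}
    (hρ : IsStringCGroupRep ρ) : r ≤ n - 1 := by
  by_contra! hr
  obtain ⟨k, rfl | rfl⟩ := n.even_or_odd'
  · rcases k with _ | k
    · simpa [Subsingleton.elim (α := Perm (Fin 0)) (ρ ⟨0, hr⟩) 1] using hρ.1 ⟨0, hr⟩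
    obtain ⟨K, hKcomm, hK, hK3⟩ := exists_isMulCommutative_le_closure_pair (hρ.1 ⟨0, by omega⟩)
      (hρ.1 ⟨1, by omega⟩) (hρ.injective.ne (by simp))
    have hpair : {ρ ⟨0, by omega⟩, ρ ⟨1, by omega⟩} ⊆ ρ '' {i | i.val < 2} := by
      rintro _ (rfl | rfl) <;> exact ⟨_, by simp, rfl⟩
    have hbound := hρ.sopfr_card_add_le (hK.trans (closure_mono hpair)) (k := k) (by omega)
    have := Nat.three_le_sopfr hK3
    rw [Nat.card_fin] at hbound
    omega
  · have hbound := hρ.sopfr_card_add_le (K := zpowers (ρ ⟨0, by omega⟩)) (s := 1) (k := k)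
      (zpowers_le.2 (subset_closure ⟨_, by simp, rfl⟩)) (by omega)
    rw [Nat.card_zpowers, hρ.1, Nat.sopfr_prime Nat.prime_two, Nat.card_fin] at hbound
    omega

end StringCGroup

/-- The string C-rank of the symmetric group `S_n` is `n - 1` for `n ≥ 3`. -/
theorem symmetricGroup_stringCRank (n : ℕ) (hn : 3 ≤ n) :
    (∃ ρ : Fin (n - 1) → Equiv.Perm (Fin n), IsStringCGroupRep ρ) ∧
    (∀ (r : ℕ) (ρ : Fin r → Equiv.Perm (Fin n)), IsStringCGroupRep ρ → r ≤ n - 1) := by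
  refine ⟨?_, fun r ρ hρ => hρ.rank_le_sub_one⟩
  obtain ⟨m, rfl⟩ : ∃ m, n = m + 1 := ⟨n - 1, by omega⟩
  exact ⟨adjSwap, isStringCGroupRep_adjSwap⟩
end

section
/- For every integer n ≥ 4, the symmetric group S_n has at least one string C-group representation of rank 3. -/
/-!
Let `S_{m+1}` act on an apex `∞ = none` together with the vertices `ℤ/m` of an `m`-gon, and take
`ρ₀ = (∞ 0)`, `ρ₁ : x ↦ 1 - x`, `ρ₂ : x ↦ -x`. The last two fix `∞` and generate the dihedral
group of the polygon, made of the maps `x ↦ x + k` and `x ↦ k - x`; conjugating `ρ₀` by the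
rotations gives every transposition `(∞ x)`, so the three involutions generate `S_{m+1}`.

For three involutions with `ρ₀ρ₂ = ρ₂ρ₀`, every element of `⟨ρ₀, ρ₂⟩` is some `ρ₀ⁱρ₂ʲ`, and the
intersection property reduces to `ρ₀ ∉ ⟨ρ₁, ρ₂⟩`, `ρ₂ ∉ ⟨ρ₀, ρ₁⟩` and
`⟨ρ₀, ρ₁⟩ ∩ ⟨ρ₁, ρ₂⟩ = ⟨ρ₁⟩`. The first holds because `⟨ρ₁, ρ₂⟩` fixes `∞`. The group `⟨ρ₀, ρ₁⟩`
preserves the triangle `{∞, 0, 1}`, which `ρ₂` does not (for `m ≥ 3`), and the only dihedral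
symmetries preserving it are `1` and `ρ₁`.
-/

open Subgroup Equiv MulAction
open scoped Pointwise

section General

variable {G : Type*} [Group G]

theorem IsStringCGroupRep.map {H : Type*} [Group H] {k : ℕ} {ρ : Fin k → G}
    (h : IsStringCGroupRep ρ) (Φ : G ≃* H) : IsStringCGroupRep (Φ ∘ ρ) := by
  obtain ⟨hord, hgen, hcomm, hinter⟩ := h
  have hclosure (S : Set G) : closure (Φ '' S) = (closure S).map (Φ : G →* H) :=
    (MonoidHom.map_closure (Φ : G →* H) S).symm
  refine ⟨fun i => (orderOf_injective (Φ : G →* H) Φ.injective _).trans (hord i), ?_,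
    fun i j hij => (hcomm i j hij).map Φ, fun I J => ?_⟩
  · rw [Set.range_comp, hclosure, hgen]
    exact map_top_of_surjective _ Φ.surjective
  · simp only [Set.image_comp, hclosure, ← map_inf _ _ (Φ : G →* H) Φ.injective, hinter]

theorem disjoint_zpowers_of_orderOf_eq_two {g : G} {K : Subgroup G} (hg : orderOf g = 2)
    (hgK : g ∉ K) : Disjoint (zpowers g) K := by
  rw [disjoint_def]
  intro x hx hxK
  obtain ⟨k, rfl⟩ := mem_zpowers_iff.1 hx
  rw [← zpow_mod_orderOf, hg, Nat.cast_ofNat] at hxK ⊢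
  rcases Int.emod_two_eq_zero_or_one k with h | h
  · rw [h, zpow_zero]
  · rw [h, zpow_one] at hxK
    exact absurd hxK hgK

theorem Commute.exists_zpow_mul_zpow_eq_of_mem_closure_pair {a c : G} (hac : Commute a c) {g : G}
    (hg : g ∈ closure {a, c}) : ∃ i j : ℤ, a ^ i * c ^ j = g := by
  induction hg using closure_induction_left with
  | one => exact ⟨0, 0, by simp⟩
  | mul_left x hx y _ ih =>
    obtain ⟨i, j, rfl⟩ := ih
    rcases hx with rfl | rfl
    · exact ⟨1 + i, j, by rw [zpow_one_add, mul_assoc]⟩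
    · exact ⟨i, 1 + j, by
        rw [zpow_one_add, ← mul_assoc, ← mul_assoc, (hac.zpow_left i).eq]⟩
  | inv_mul_cancel x hx y _ ih =>
    obtain ⟨i, j, rfl⟩ := ih
    rcases hx with rfl | rfl
    · exact ⟨-1 + i, j, by rw [zpow_add, zpow_neg_one, mul_assoc]⟩
    · exact ⟨i, -1 + j, by
        rw [zpow_add, zpow_neg_one, ← mul_assoc, ← mul_assoc, (hac.inv_right.zpow_left i).eq]⟩

theorem Commute.closure_pair_inf_le {a c : G} (hac : Commute a c) (hc : orderOf c = 2)
    {K : Subgroup G} (haK : a ∈ K) (hcK : c ∉ K) : closure {a, c} ⊓ K ≤ closure {a} := by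
  rintro _ ⟨hg, hgK⟩
  obtain ⟨i, j, rfl⟩ := hac.exists_zpow_mul_zpow_eq_of_mem_closure_pair hg
  have hcjK : c ^ j ∈ K :=
    inv_mul_cancel_left (a ^ i) (c ^ j) ▸ mul_mem (inv_mem (zpow_mem haK i)) hgK
  have hj : c ^ j = 1 :=
    disjoint_def.1 (disjoint_zpowers_of_orderOf_eq_two hc hcK) (zpow_mem_zpowers c j) hcjK
  rw [hj, mul_one]
  exact zpow_mem (subset_closure (Set.mem_singleton a)) i

theorem Fin.exists_eq_or_eq_or_eq_of_ne {a b : Fin 3} (hab : a ≠ b) :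
    ∃ c, a ≠ c ∧ b ≠ c ∧ ∀ x, x = a ∨ x = b ∨ x = c := by
  revert a b; decide

theorem Fin.cases_of_ne_of_ne_of_ne {a b c : Fin 3} (hab : a ≠ b) (hac : a ≠ c) (hbc : b ≠ c) :
    (a = 0 ∧ b = 1 ∧ c = 2) ∨ (a = 0 ∧ b = 2 ∧ c = 1) ∨ (a = 1 ∧ b = 0 ∧ c = 2) ∨
      (a = 1 ∧ b = 2 ∧ c = 0) ∨ (a = 2 ∧ b = 0 ∧ c = 1) ∨ (a = 2 ∧ b = 1 ∧ c = 0) := by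
  revert a b c; decide

theorem closure_image_inf_closure_image_of_fin_three (ρ : Fin 3 → G)
    (hord : ∀ i, orderOf (ρ i) = 2)
    (hsingle : ∀ a b c : Fin 3, a ≠ b → a ≠ c → b ≠ c → ρ a ∉ closure {ρ b, ρ c})
    (hpair : ∀ a b c : Fin 3, a ≠ b → a ≠ c → b ≠ c →
      closure {ρ a, ρ c} ⊓ closure {ρ b, ρ c} ≤ closure {ρ c})
    (I J : Set (Fin 3)) : closure (ρ '' I) ⊓ closure (ρ '' J) = closure (ρ '' (I ∩ J)) := by
  refine le_antisymm ?_ (le_inf (closure_mono (Set.image_mono Set.inter_subset_left))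
    (closure_mono (Set.image_mono Set.inter_subset_right)))
  by_cases hIJ : I ⊆ J
  · rw [Set.inter_eq_left.2 hIJ]; exact inf_le_left
  by_cases hJI : J ⊆ I
  · rw [Set.inter_eq_right.2 hJI]; exact inf_le_right
  obtain ⟨a, haI, haJ⟩ := Set.not_subset.1 hIJ
  obtain ⟨b, hbJ, hbI⟩ := Set.not_subset.1 hJI
  have hab : a ≠ b := ne_of_mem_of_not_mem haI hbI
  obtain ⟨c, hac, hbc, hcover⟩ := Fin.exists_eq_or_eq_or_eq_of_ne hab
  -- With `a ∈ I \ J`, `b ∈ J \ I` and `c` the third index, `hpair` puts `g` in `⟨ρ c⟩`; if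
  -- moreover `c ∉ I ∩ J`, then `I ⊆ {a}` or `J ⊆ {b}`, and `hsingle` gives `g = 1`.
  have hI : I ⊆ {a, c} := fun x hx =>
    (hcover x).imp_right (·.resolve_left (ne_of_mem_of_not_mem hx hbI))
  have hJ : J ⊆ {b, c} := fun x hx => (hcover x).resolve_left (ne_of_mem_of_not_mem hx haJ)
  rintro g ⟨hgI, hgJ⟩
  have hgac : g ∈ closure {ρ a, ρ c} :=
    closure_mono (Set.image_pair ρ a c ▸ Set.image_mono hI) hgI
  have hgbc : g ∈ closure {ρ b, ρ c} :=
    closure_mono (Set.image_pair ρ b c ▸ Set.image_mono hJ) hgJ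
  have eq_one_of_subset {S : Set (Fin 3)} {x y z : Fin 3} (hxy : x ≠ y) (hxz : x ≠ z)
      (hyz : y ≠ z) (hS : S ⊆ {x}) (hgS : g ∈ closure (ρ '' S))
      (hgyz : g ∈ closure {ρ y, ρ z}) : g = 1 := by
    have hgx : g ∈ zpowers (ρ x) :=
      zpowers_eq_closure (ρ x) ▸ closure_mono (Set.image_singleton ▸ Set.image_mono hS) hgS
    exact disjoint_def.1
      (disjoint_zpowers_of_orderOf_eq_two (hord x) (hsingle x y z hxy hxz hyz)) hgx hgyz
  have hgc : g ∈ closure {ρ c} := hpair a b c hab hac hbc ⟨hgac, hgbc⟩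
  by_cases hcI : c ∈ I
  · by_cases hcJ : c ∈ J
    · exact closure_mono
        (Set.singleton_subset_iff.2 (Set.mem_image_of_mem ρ (Set.mem_inter hcI hcJ))) hgc
    · rw [eq_one_of_subset hab.symm hbc hac
        (fun x hx => (hJ hx).resolve_right (ne_of_mem_of_not_mem hx hcJ)) hgJ hgac]
      exact one_mem _
  · rw [eq_one_of_subset hab hac hbc
      (fun x hx => (hI hx).resolve_right (ne_of_mem_of_not_mem hx hcI)) hgI hgbc]
    exact one_mem _

theorem isStringCGroupRep_of_fin_three (ρ : Fin 3 → G) (hord : ∀ i, orderOf (ρ i) = 2)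
    (hgen : closure (Set.range ρ) = ⊤) (hcomm : Commute (ρ 0) (ρ 2))
    (h0 : ρ 0 ∉ closure {ρ 1, ρ 2}) (h2 : ρ 2 ∉ closure {ρ 0, ρ 1})
    (h01_12 : closure {ρ 0, ρ 1} ⊓ closure {ρ 1, ρ 2} ≤ closure {ρ 1}) :
    IsStringCGroupRep ρ := by
  have mem_left {x y : G} : x ∈ closure {x, y} := subset_closure (Set.mem_insert x _)
  have mem_right {x y : G} : y ∈ closure {x, y} := subset_closure (Set.mem_insert_of_mem x rfl)
  have h01_02 : closure {ρ 0, ρ 1} ⊓ closure {ρ 0, ρ 2} ≤ closure {ρ 0} :=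
    inf_comm (closure {ρ 0, ρ 2}) _ ▸ hcomm.closure_pair_inf_le (hord 2) mem_left h2
  have h02_12 : closure {ρ 0, ρ 2} ⊓ closure {ρ 1, ρ 2} ≤ closure {ρ 2} :=
    Set.pair_comm (ρ 2) (ρ 0) ▸ hcomm.symm.closure_pair_inf_le (hord 0) mem_right h0
  have h1 : ρ 1 ∉ closure {ρ 0, ρ 2} := by
    intro h
    have h12 : ρ 1 ∈ zpowers (ρ 2) := zpowers_eq_closure (ρ 2) ▸ h02_12 ⟨h, mem_left⟩
    have := disjoint_def.1 (disjoint_zpowers_of_orderOf_eq_two (hord 2) h2) h12 mem_right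
    simpa [this] using hord 1
  refine ⟨hord, hgen, ?_, closure_image_inf_closure_image_of_fin_three ρ hord ?_ ?_⟩
  · intro i j hij
    obtain ⟨rfl, rfl⟩ : i = 0 ∧ j = 2 := by omega
    exact hcomm
  all_goals
    intro a b c hab hac hbc
    rcases Fin.cases_of_ne_of_ne_of_ne hab hac hbc with
      ⟨rfl, rfl, rfl⟩ | ⟨rfl, rfl, rfl⟩ | ⟨rfl, rfl, rfl⟩ | ⟨rfl, rfl, rfl⟩ | ⟨rfl, rfl, rfl⟩ |
        ⟨rfl, rfl, rfl⟩ <;>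
      (try simp only [Set.pair_comm (ρ 1) (ρ 0), Set.pair_comm (ρ 2) (ρ 0),
        Set.pair_comm (ρ 2) (ρ 1)]) <;>
      first | assumption | rwa [inf_comm]

end General

theorem orderOf_swap {α : Type*} [DecidableEq α] {x y : α} (hxy : x ≠ y) :
    orderOf (swap x y) = 2 :=
  orderOf_eq_prime (by rw [sq, swap_mul_self]) (by rwa [Ne, swap_eq_one_iff])

theorem ZMod.one_ne_zero_of_two_lt {m : ℕ} [Fact (2 < m)] : (1 : ZMod m) ≠ 0 :=
  fun h => ZMod.neg_one_ne_one (by rw [h, neg_zero])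

namespace PolygonApex

variable {m : ℕ}

def translate (k : ZMod m) : Perm (Option (ZMod m)) := (Equiv.addRight k).optionCongr

def reflect (k : ZMod m) : Perm (Option (ZMod m)) := (Equiv.subLeft k).optionCongr

@[simp] theorem translate_none (k : ZMod m) : translate k none = none := rfl
@[simp] theorem translate_some (k x : ZMod m) : translate k (some x) = some (x + k) := rfl
@[simp] theorem reflect_none (k : ZMod m) : reflect k none = none := rfl
@[simp] theorem reflect_some (k x : ZMod m) : reflect k (some x) = some (k - x) := rfl

theorem translate_zero : translate (0 : ZMod m) = 1 := by
  ext (_ | x) <;> simp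

theorem reflect_mul_translate (a b : ZMod m) : reflect a * translate b = reflect (a - b) := by
  ext (_ | x) : 1
  · rfl
  · exact congrArg some (show a - (x + b) = a - b - x by ring)

theorem reflect_mul_reflect (a b : ZMod m) : reflect a * reflect b = translate (a - b) := by
  ext (_ | x) : 1
  · rfl
  · exact congrArg some (show a - (b - x) = x + (a - b) by ring)

theorem reflect_mul_self (a : ZMod m) : reflect a * reflect a = 1 := by
  rw [reflect_mul_reflect, sub_self, translate_zero]

theorem reflect_inv (a : ZMod m) : (reflect a)⁻¹ = reflect a :=
  inv_eq_of_mul_eq_one_right (reflect_mul_self a)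

theorem exists_eq_translate_or_eq_reflect_of_mem_closure {g : Perm (Option (ZMod m))}
    (hg : g ∈ closure {reflect 1, reflect 0}) : ∃ k, g = translate k ∨ g = reflect k := by
  have key {a : ZMod m} {g : Perm (Option (ZMod m))}
      (h : ∃ k, g = translate k ∨ g = reflect k) :
      ∃ k, reflect a * g = translate k ∨ reflect a * g = reflect k := by
    obtain ⟨k, rfl | rfl⟩ := h
    · exact ⟨a - k, Or.inr (reflect_mul_translate a k)⟩
    · exact ⟨a - k, Or.inl (reflect_mul_reflect a k)⟩
  induction hg using closure_induction_left with
  | one => exact ⟨0, Or.inl translate_zero.symm⟩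
  | mul_left x hx y _ ih => rcases hx with rfl | rfl <;> exact key ih
  | inv_mul_cancel x hx y _ ih => rcases hx with rfl | rfl <;> exact reflect_inv _ ▸ key ih

theorem translate_mem_closure [NeZero m] (k : ZMod m) :
    translate k ∈ closure {reflect 1, reflect 0} := by
  rw [← ZMod.natCast_zmod_val k]
  induction k.val with
  | zero => rw [Nat.cast_zero, translate_zero]; exact one_mem _
  | succ j ih =>
    have h : translate ((j + 1 : ℕ) : ZMod m) =
        reflect 1 * (reflect 0 * translate (j : ZMod m)) := by
      rw [reflect_mul_translate, reflect_mul_reflect]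
      congr 1
      push_cast
      ring
    rw [h]
    exact mul_mem (subset_closure (Set.mem_insert _ _))
      (mul_mem (subset_closure (Set.mem_insert_of_mem _ rfl)) ih)

theorem closure_swap_reflect_one_reflect_zero [NeZero m] :
    closure {swap none (some 0), reflect 1, reflect (0 : ZMod m)} = ⊤ := by
  set G := closure {swap none (some 0), reflect 1, reflect (0 : ZMod m)}
  have hswap (y : Option (ZMod m)) : swap none y ∈ G := by
    obtain _ | x := y
    · rw [swap_self]
      exact one_mem G
    · have ht : translate x ∈ G := closure_mono (Set.subset_insert _ _) (translate_mem_closure x)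
      have h := swap_apply_apply (translate x) none (some 0)
      rw [translate_none, translate_some, zero_add] at h
      rw [h]
      exact mul_mem (mul_mem ht (subset_closure (Set.mem_insert _ _))) (inv_mem ht)
  rw [eq_top_iff, ← Perm.closure_isSwap, closure_le]
  rintro _ ⟨x, y, -, rfl⟩
  exact SubmonoidClass.swap_mem_trans G (swap_comm x none ▸ hswap x) (hswap y)

variable (m) in
def triangle : Set (Option (ZMod m)) := {none, some 0, some 1}

theorem some_mem_triangle {x : ZMod m} : some x ∈ triangle m ↔ x = 0 ∨ x = 1 := by
  simp [triangle]

theorem closure_le_stabilizer_triangle [Fact (2 < m)] :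
    closure {swap none (some 0), reflect 1} ≤
      stabilizer (Perm (Option (ZMod m))) (triangle m) := by
  rw [closure_le, Set.insert_subset_iff, Set.singleton_subset_iff]
  simp only [SetLike.mem_coe, mem_stabilizer_iff]
  constructor
  · simp [triangle, Set.smul_set_insert, swap_apply_of_ne_of_ne, ZMod.one_ne_zero_of_two_lt,
      Set.insert_comm]
  · simp [triangle, Set.smul_set_insert, Set.pair_comm]

theorem reflect_zero_notMem_stabilizer_triangle [Fact (2 < m)] :
    reflect 0 ∉ stabilizer (Perm (Option (ZMod m))) (triangle m) := by
  rw [mem_stabilizer_iff]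
  intro h
  have := h ▸ Set.smul_mem_smul_set (a := reflect (0 : ZMod m)) (some_mem_triangle.2 (Or.inr rfl))
  simp [some_mem_triangle, ZMod.one_ne_zero_of_two_lt, ZMod.neg_one_ne_one] at this

theorem closure_swap_reflect_one_inf_closure_reflect_le [Fact (2 < m)] :
    closure {swap none (some 0), reflect 1} ⊓ closure {reflect 1, reflect (0 : ZMod m)} ≤
      closure {reflect 1} := by
  rintro g ⟨hg01, hg12⟩
  have hg : ∀ x ∈ triangle m, g x ∈ triangle m := fun x hx =>
    (mem_stabilizer_iff.1 (closure_le_stabilizer_triangle hg01)) ▸ Set.smul_mem_smul_set hx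
  have h0 := hg (some 0) (some_mem_triangle.2 (Or.inl rfl))
  have h1 := hg (some 1) (some_mem_triangle.2 (Or.inr rfl))
  obtain ⟨k, rfl | rfl⟩ := exists_eq_translate_or_eq_reflect_of_mem_closure hg12
  · simp only [translate_some, zero_add, some_mem_triangle] at h0 h1
    obtain rfl | rfl := h0
    · rw [translate_zero]; exact one_mem _
    · simp [ZMod.one_ne_zero_of_two_lt, add_eq_zero_iff_neg_eq, ZMod.neg_one_ne_one] at h1
  · simp only [reflect_some, sub_zero, some_mem_triangle] at h0 h1
    obtain rfl | rfl := h0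
    · simp [ZMod.one_ne_zero_of_two_lt, ZMod.neg_one_ne_one] at h1
    · exact subset_closure rfl

theorem reflect_ne_one [Fact (2 < m)] (k : ZMod m) : reflect k ≠ 1 := by
  intro h
  have h0 := DFunLike.congr_fun h (some 0)
  have h1 := DFunLike.congr_fun h (some 1)
  simp only [reflect_some, sub_zero, Perm.one_apply, Option.some.injEq] at h0 h1
  subst h0
  simp [ZMod.neg_one_ne_one] at h1

theorem orderOf_reflect [Fact (2 < m)] (k : ZMod m) : orderOf (reflect k) = 2 :=
  orderOf_eq_prime (by rw [sq, reflect_mul_self]) (reflect_ne_one k)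

theorem commute_swap_reflect_zero : Commute (swap none (some (0 : ZMod m))) (reflect 0) := by
  have h := mul_swap_eq_swap_mul (reflect (0 : ZMod m)) none (some 0)
  rw [reflect_none, reflect_some, sub_zero] at h
  exact h.symm

theorem swap_notMem_closure_reflect :
    swap none (some 0) ∉ closure {reflect 1, reflect (0 : ZMod m)} := by
  intro h
  obtain ⟨k, hk | hk⟩ := exists_eq_translate_or_eq_reflect_of_mem_closure h <;>
    simpa using DFunLike.congr_fun hk none

theorem isStringCGroupRep [NeZero m] [Fact (2 < m)] :
    IsStringCGroupRep ![swap none (some 0), reflect 1, reflect (0 : ZMod m)] := by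
  refine isStringCGroupRep_of_fin_three _ ?_ ?_ commute_swap_reflect_zero
    swap_notMem_closure_reflect
    (fun h => reflect_zero_notMem_stabilizer_triangle (closure_le_stabilizer_triangle h))
    closure_swap_reflect_one_inf_closure_reflect_le
  · intro i
    fin_cases i
    exacts [orderOf_swap (Option.some_ne_none _).symm, orderOf_reflect 1, orderOf_reflect 0]
  · rw [Matrix.range_cons, Matrix.range_cons_cons_empty, Set.singleton_union]
    exact closure_swap_reflect_one_reflect_zero

end PolygonApex

/-- Every symmetric group `S_n` with `n ≥ 4` has a string C-group representation
of rank three. -/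
theorem symmetricGroup_exists_rank_three (n : ℕ) (hn : 4 ≤ n) :
    ∃ ρ : Fin 3 → Equiv.Perm (Fin n), IsStringCGroupRep ρ := by
  obtain ⟨m, rfl⟩ : ∃ m, n = m + 1 := ⟨n - 1, by omega⟩
  have : Fact (2 < m) := ⟨by omega⟩
  have : NeZero m := ⟨by omega⟩
  let e : Option (ZMod m) ≃ Fin (m + 1) := Fintype.equivOfCardEq (by simp [ZMod.card])
  exact ⟨_, PolygonApex.isStringCGroupRep.map e.permCongrHom⟩
end

section
/- Let G be a finite group having no non-trivial cyclic normal subgroup (every normal subgroup of G that is cyclic is trivial). Suppose ρ_0, ρ_1, ρ_2 are elements of G such that each ρ_i has order 2, the product ρ_0ρ_2 has order 2, and G is generated by {ρ_0, ρ_1, ρ_2}. Then (G; (ρ_0, ρ_1, ρ_2)) satisfies the intersection property, and hence is a string C-group representation of rank 3 of G. -/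
open Subgroup
open scoped Pointwise

theorem Monotone.inf_eq_inter_of_iInf_le {ι α : Type*} [CompleteLattice α] {f : Set ι → α}
    (hf : Monotone f) (h : ∀ I, ⨅ k ∈ Iᶜ, f {k}ᶜ ≤ f I) (I J : Set ι) :
    f I ⊓ f J = f (I ∩ J) := by
  have hI : ∀ I, f I = ⨅ k ∈ Iᶜ, f {k}ᶜ := fun I =>
    le_antisymm (le_iInf₂ fun k hk => hf (Set.subset_compl_singleton_iff.mpr hk)) (h I)
  rw [hI I, hI J, hI (I ∩ J), Set.compl_inter, iInf_union]

theorem Monotone.inf_eq_inter_of_fin_three {α : Type*} [CompleteLattice α]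
    {f : Set (Fin 3) → α} (hf : Monotone f) (huniv : f Set.univ = ⊤)
    (h0 : f {0, 1} ⊓ f {0, 2} ≤ f {0}) (h1 : f {0, 1} ⊓ f {1, 2} ≤ f {1})
    (h2 : f {0, 2} ⊓ f {1, 2} ≤ f {2}) (h01 : f {0} ⊓ f {1} ≤ f ∅) (I J : Set (Fin 3)) :
    f I ⊓ f J = f (I ∩ J) := by
  refine hf.inf_eq_inter_of_iInf_le (fun I => ?_) I J
  have c0 : ({0}ᶜ : Set (Fin 3)) = {1, 2} := by ext i; fin_cases i <;> simp
  have c1 : ({1}ᶜ : Set (Fin 3)) = {0, 2} := by ext i; fin_cases i <;> simp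
  have c2 : ({2}ᶜ : Set (Fin 3)) = {0, 1} := by ext i; fin_cases i <;> simp
  have le_of_notMem : ∀ k ∉ I, ⨅ j ∈ Iᶜ, f {j}ᶜ ≤ f {k}ᶜ := fun k hk => iInf₂_le k hk
  have le_of_notMem₂ {i j k : Fin 3} (h : f {j}ᶜ ⊓ f {k}ᶜ ≤ f {i}) (hj : j ∉ I) (hk : k ∉ I) :
      ⨅ l ∈ Iᶜ, f {l}ᶜ ≤ f {i} :=
    (le_inf (le_of_notMem j hj) (le_of_notMem k hk)).trans h
  have h0' : f {1}ᶜ ⊓ f {2}ᶜ ≤ f {0} := by rwa [c1, c2, inf_comm]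
  have h1' : f {0}ᶜ ⊓ f {2}ᶜ ≤ f {1} := by rwa [c0, c2, inf_comm]
  have h2' : f {0}ᶜ ⊓ f {1}ᶜ ≤ f {2} := by rwa [c0, c1, inf_comm]
  by_cases h0I : 0 ∈ I <;> by_cases h1I : 1 ∈ I <;> by_cases h2I : 2 ∈ I
  · exact le_top.trans (huniv ▸ hf fun i _ => by fin_cases i <;> assumption)
  · exact (le_of_notMem 2 h2I).trans (hf (by simp [c2, Set.insert_subset_iff, h0I, h1I]))
  · exact (le_of_notMem 1 h1I).trans (hf (by simp [c1, Set.insert_subset_iff, h0I, h2I]))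
  · exact (le_of_notMem₂ h0' h1I h2I).trans (hf (by simpa))
  · exact (le_of_notMem 0 h0I).trans (hf (by simp [c0, Set.insert_subset_iff, h1I, h2I]))
  · exact (le_of_notMem₂ h1' h0I h2I).trans (hf (by simpa))
  · exact (le_of_notMem₂ h2' h0I h1I).trans (hf (by simpa))
  · exact (le_inf (le_of_notMem₂ h0' h1I h2I) (le_of_notMem₂ h1' h0I h2I)).trans
      (h01.trans (hf (Set.empty_subset I)))

section

variable {G : Type*} [Group G] {a b c : G}

theorem inv_eq_self_of_sq_eq_one (ha : a ^ 2 = 1) : a⁻¹ = a :=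
  inv_eq_of_mul_eq_one_right (by rwa [← sq])

theorem commute_of_sq_eq_one (ha : a ^ 2 = 1) (hb : b ^ 2 = 1) (hab : (a * b) ^ 2 = 1) :
    Commute a b := by
  have := inv_eq_self_of_sq_eq_one hab
  rwa [mul_inv_rev, inv_eq_self_of_sq_eq_one ha, inv_eq_self_of_sq_eq_one hb, eq_comm] at this

theorem conj_mul_eq_inv_left (ha : a ^ 2 = 1) (hb : b ^ 2 = 1) :
    a * (a * b) * a⁻¹ = (a * b)⁻¹ := by
  rw [mul_inv_rev, inv_eq_self_of_sq_eq_one ha, inv_eq_self_of_sq_eq_one hb, ← mul_assoc, ← sq,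
    ha, one_mul]

theorem conj_mul_eq_inv_right (ha : a ^ 2 = 1) (hb : b ^ 2 = 1) :
    b * (a * b) * b⁻¹ = (a * b)⁻¹ := by
  rw [mul_inv_rev, inv_eq_self_of_sq_eq_one ha, inv_eq_self_of_sq_eq_one hb, mul_assoc,
    mul_assoc, ← sq, hb, mul_one]

namespace Subgroup

theorem mem_zpowers_iff_of_sq_eq_one {y : G} (ha : a ^ 2 = 1) :
    y ∈ zpowers a ↔ y = 1 ∨ y = a := by
  refine ⟨?_, by rintro (rfl | rfl) <;> simp [one_mem, mem_zpowers]⟩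
  rintro ⟨k, rfl⟩
  obtain ⟨n, rfl | rfl⟩ := Int.even_or_odd' k
  · left; dsimp only; rw [zpow_mul, zpow_ofNat, ha, one_zpow]
  · right; dsimp only; rw [zpow_add_one, zpow_mul, zpow_ofNat, ha, one_zpow, one_mul]

theorem zpowers_inf_zpowers_eq_bot (ha : a ^ 2 = 1) (hb : b ^ 2 = 1) (hab : a ≠ b) :
    zpowers a ⊓ zpowers b = ⊥ := by
  refine eq_bot_iff.mpr fun y ⟨hya, hyb⟩ => mem_bot.mpr ?_
  rcases (mem_zpowers_iff_of_sq_eq_one ha).mp hya with h | rfl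
  · exact h
  · rcases (mem_zpowers_iff_of_sq_eq_one hb).mp hyb with h | rfl
    exacts [h, absurd rfl hab]

theorem mem_normalizer_zpowers {g y : G} (h : g * y * g⁻¹ = y ∨ g * y * g⁻¹ = y⁻¹) :
    g ∈ normalizer (zpowers y : Set G) := by
  rw [mem_normalizer_iff_map_conj_eq, MonoidHom.map_zpowers]
  change zpowers (g * y * g⁻¹) = zpowers y
  rcases h with h | h <;> rw [h]
  exact zpowers_inv

theorem zpowers_normal_of_closure_eq_top {S : Set G} (hS : closure S = ⊤) {y : G}
    (h : ∀ s ∈ S, s * y * s⁻¹ = y ∨ s * y * s⁻¹ = y⁻¹) : (zpowers y).Normal := by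
  rw [← normalizer_eq_top_iff, eq_top_iff, ← hS, closure_le]
  exact fun s hs => mem_normalizer_zpowers (h s hs)

theorem conj_eq_inv_of_mem_zpowers {g x y : G} (h : g * x * g⁻¹ = x⁻¹) (hy : y ∈ zpowers x) :
    g * y * g⁻¹ = y⁻¹ := by
  obtain ⟨k, rfl⟩ := hy
  simp only [← conj_zpow, h, inv_zpow]

theorem mem_zpowers_or_mul_mem_zpowers {x : G} (ha : a ^ 2 = 1) (hb : b ^ 2 = 1)
    (hx : x ∈ closure {a, b}) : x ∈ zpowers (a * b) ∨ x * b ∈ zpowers (a * b) := by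
  have hbN : zpowers b ≤ normalizer (zpowers (a * b) : Set G) :=
    zpowers_le.mpr (mem_normalizer_zpowers (Or.inr (conj_mul_eq_inv_right ha hb)))
  have hle : closure {a, b} ≤ zpowers (a * b) ⊔ zpowers b := by
    refine (closure_le _).mpr (Set.insert_subset_iff.mpr ⟨?_, Set.singleton_subset_iff.mpr ?_⟩)
    · simpa using mul_mem (mem_sup_left (mem_zpowers (a * b)))
        (mem_sup_right (inv_mem (mem_zpowers b)))
    · exact mem_sup_right (mem_zpowers b)
  have hx' : x ∈ (zpowers (a * b) : Set G) * (zpowers b : Set G) := by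
    rw [← coe_mul_of_right_le_normalizer_left _ _ hbN]; exact hle hx
  obtain ⟨z, hz, c, hc, rfl⟩ := hx'
  rcases (mem_zpowers_iff_of_sq_eq_one hb).mp hc with rfl | rfl
  · left; simpa using hz
  · right; rwa [mul_assoc, ← sq, hb, mul_one]

theorem closure_pair_inf_closure_pair_le_of_commute (hb : b ^ 2 = 1) (hc : c ^ 2 = 1)
    (hbc : b ≠ c) (hac : Commute a c)
    (h : closure {a, b} ⊓ closure {b, c} ≤ closure {b}) :
    closure {a, b} ⊓ closure {a, c} ≤ closure {a} := by
  rintro x ⟨hxab, hxac⟩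
  have hcN : zpowers c ≤ normalizer (zpowers a : Set G) :=
    zpowers_le.mpr (mem_normalizer_zpowers (Or.inl hac.symm.mul_inv_cancel))
  have hx : x ∈ (zpowers a : Set G) * (zpowers c : Set G) := by
    rw [← coe_mul_of_right_le_normalizer_left _ _ hcN, zpowers_eq_closure, zpowers_eq_closure,
      ← closure_union, Set.singleton_union]
    exact hxac
  obtain ⟨y, hy, z, hz, rfl⟩ := hx
  have hzab : z ∈ closure {a, b} := by
    simpa using mul_mem (inv_mem (zpowers_le.mpr (subset_closure (by simp)) hy)) hxab
  have hzbc : z ∈ closure {b, c} := zpowers_le.mpr (subset_closure (by simp)) hz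
  have hzb : z ∈ zpowers b ⊓ zpowers c := ⟨zpowers_eq_closure b ▸ h ⟨hzab, hzbc⟩, hz⟩
  rw [zpowers_inf_zpowers_eq_bot hb hc hbc, mem_bot] at hzb
  simpa [hzb, zpowers_eq_closure] using hy

theorem eq_one_of_conj_eq_self_or_inv (hG : ∀ H : Subgroup G, H.Normal → IsCyclic H → H = ⊥)
    {S : Set G} (hS : closure S = ⊤) {y : G}
    (h : ∀ s ∈ S, s * y * s⁻¹ = y ∨ s * y * s⁻¹ = y⁻¹) : y = 1 :=
  zpowers_eq_bot.mp (hG _ (zpowers_normal_of_closure_eq_top hS h) inferInstance)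

theorem ne_of_commute_of_closure_eq_top (hG : ∀ H : Subgroup G, H.Normal → IsCyclic H → H = ⊥)
    (hgen : closure {a, b, c} = ⊤) (ha : a ≠ 1) (hac : Commute a c) : a ≠ b := by
  rintro rfl
  refine ha (eq_one_of_conj_eq_self_or_inv hG hgen fun s hs => Or.inl ?_)
  rcases hs with rfl | rfl | rfl
  exacts [(Commute.refl s).mul_inv_cancel, (Commute.refl s).mul_inv_cancel,
    hac.symm.mul_inv_cancel]

theorem eq_one_of_mem_zpowers_of_mem_zpowers
    (hG : ∀ H : Subgroup G, H.Normal → IsCyclic H → H = ⊥) (hgen : closure {a, b, c} = ⊤)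
    (ha : a ^ 2 = 1) (hb : b ^ 2 = 1) (hc : c ^ 2 = 1) {y : G} (hya : y ∈ zpowers (a * b))
    (hyc : y ∈ zpowers (c * b)) : y = 1 := by
  refine eq_one_of_conj_eq_self_or_inv hG hgen fun s hs => Or.inr ?_
  rcases hs with rfl | rfl | rfl
  · exact conj_eq_inv_of_mem_zpowers (conj_mul_eq_inv_left ha hb) hya
  · exact conj_eq_inv_of_mem_zpowers (conj_mul_eq_inv_right ha hb) hya
  · exact conj_eq_inv_of_mem_zpowers (conj_mul_eq_inv_left hc hb) hyc

theorem eq_one_of_mem_zpowers_of_mul_mem_zpowers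
    (hG : ∀ H : Subgroup G, H.Normal → IsCyclic H → H = ⊥) (hgen : closure {a, b, c} = ⊤)
    (ha : a ^ 2 = 1) (hb : b ^ 2 = 1) (hc : c ^ 2 = 1) (hac : Commute a c) {y : G}
    (hya : y ∈ zpowers (a * b)) (hyc : y * b ∈ zpowers (c * b)) : y = 1 := by
  have hay : a * y * a⁻¹ = y⁻¹ := conj_eq_inv_of_mem_zpowers (conj_mul_eq_inv_left ha hb) hya
  have hby : b * y * b⁻¹ = y⁻¹ := conj_eq_inv_of_mem_zpowers (conj_mul_eq_inv_right ha hb) hya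
  have hy2 : y⁻¹ = y := by
    have := conj_eq_inv_of_mem_zpowers (conj_mul_eq_inv_right hc hb) hyc
    rw [mul_inv_rev, inv_eq_self_of_sq_eq_one hb, mul_assoc, mul_assoc, ← sq, hb, mul_one] at this
    exact (mul_left_cancel this).symm
  have hyc' : y * c ∈ zpowers (c * b) := by
    have : y * c = y * b * (c * b)⁻¹ := by
      rw [mul_inv_rev, inv_eq_self_of_sq_eq_one hb, inv_eq_self_of_sq_eq_one hc, mul_assoc,
        ← mul_assoc b, ← sq, hb, one_mul]
    rw [this]
    exact mul_mem hyc (inv_mem (mem_zpowers _))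
  have hw : (y * c) ^ 2 = 1 := by
    refine eq_one_of_conj_eq_self_or_inv hG hgen fun s hs => ?_
    rcases hs with rfl | rfl | rfl
    · have hsy : Commute s y := mul_inv_eq_iff_eq_mul.mp (hay.trans hy2)
      exact Or.inl ((hsy.mul_right hac).pow_right 2).mul_inv_cancel
    · exact Or.inr (conj_eq_inv_of_mem_zpowers (conj_mul_eq_inv_right hc hb) (pow_mem hyc' 2))
    · exact Or.inr (conj_eq_inv_of_mem_zpowers (conj_mul_eq_inv_left hc hb) (pow_mem hyc' 2))
  have hcy : c * y * c⁻¹ = y⁻¹ := by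
    rw [sq, mul_assoc, ← mul_assoc c, mul_eq_one_iff_eq_inv] at hw
    rw [inv_eq_self_of_sq_eq_one hc]
    exact (inv_eq_iff_eq_inv.mpr hw).symm
  refine eq_one_of_conj_eq_self_or_inv hG hgen fun s hs => Or.inr ?_
  rcases hs with rfl | rfl | rfl
  exacts [hay, hby, hcy]

theorem closure_pair_inf_closure_pair_le
    (hG : ∀ H : Subgroup G, H.Normal → IsCyclic H → H = ⊥) (hgen : closure {a, b, c} = ⊤)
    (ha : a ^ 2 = 1) (hb : b ^ 2 = 1) (hc : c ^ 2 = 1) (hac : Commute a c) :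
    closure {a, b} ⊓ closure {b, c} ≤ closure {b} := by
  rintro x ⟨hxab, hxbc⟩
  rw [Set.pair_comm] at hxbc
  have hgen' : closure {c, b, a} = ⊤ := by
    rwa [Set.insert_comm, Set.pair_comm, Set.insert_comm]
  rw [← zpowers_eq_closure, mem_zpowers_iff_of_sq_eq_one hb]
  rcases mem_zpowers_or_mul_mem_zpowers ha hb hxab with h1 | h1 <;>
    rcases mem_zpowers_or_mul_mem_zpowers hc hb hxbc with h2 | h2
  · exact Or.inl (eq_one_of_mem_zpowers_of_mem_zpowers hG hgen ha hb hc h1 h2)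
  · exact Or.inl (eq_one_of_mem_zpowers_of_mul_mem_zpowers hG hgen ha hb hc hac h1 h2)
  · exact Or.inl (eq_one_of_mem_zpowers_of_mul_mem_zpowers hG hgen' hc hb ha hac.symm h2 h1)
  · refine Or.inr ((mul_eq_one_iff_eq_inv.mp ?_).trans (inv_eq_self_of_sq_eq_one hb))
    exact eq_one_of_mem_zpowers_of_mem_zpowers hG hgen ha hb hc h1 h2

end Subgroup

theorem closure_image_inf_closure_image_of_fin_three_s12 (ha : a ^ 2 = 1) (hb : b ^ 2 = 1)
    (hc : c ^ 2 = 1) (hab : a ≠ b) (hbc : b ≠ c) (hac : Commute a c) (hgen : closure {a, b, c} = ⊤)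
    (h : closure {a, b} ⊓ closure {b, c} ≤ closure {b}) (I J : Set (Fin 3)) :
    closure (![a, b, c] '' I) ⊓ closure (![a, b, c] '' J) = closure (![a, b, c] '' (I ∩ J)) := by
  have h_a : closure {a, b} ⊓ closure {a, c} ≤ closure {a} :=
    closure_pair_inf_closure_pair_le_of_commute hb hc hbc hac h
  have h_c : closure {a, c} ⊓ closure {b, c} ≤ closure {c} := by
    have := closure_pair_inf_closure_pair_le_of_commute hb ha hab.symm hac.symm
      (by rwa [Set.pair_comm c b, Set.pair_comm b a, inf_comm])
    rwa [Set.pair_comm c b, Set.pair_comm c a, inf_comm] at this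
  have h_ab : closure {a} ⊓ closure {b} ≤ ⊥ := by
    simpa [zpowers_eq_closure] using (zpowers_inf_zpowers_eq_bot ha hb hab).le
  refine Monotone.inf_eq_inter_of_fin_three (f := fun I => closure (![a, b, c] '' I))
    (fun I J hIJ => closure_mono (Set.image_mono hIJ)) ?_ ?_ ?_ ?_ ?_ I J
  · rw [Set.image_univ, Matrix.range_cons, Matrix.range_cons, Matrix.range_cons_empty,
      Set.singleton_union, Set.singleton_union, hgen]
  all_goals simp only [Set.image_insert_eq, Set.image_singleton, Set.image_empty,
    Subgroup.closure_empty]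
  exacts [h_a, h, h_c, h_ab]

theorem isStringCGroupRep_of_fin_three_s12 (ha : orderOf a = 2) (hb : orderOf b = 2)
    (hc : orderOf c = 2) (hgen : closure {a, b, c} = ⊤) (hac : Commute a c)
    (hinter : ∀ I J : Set (Fin 3),
      closure (![a, b, c] '' I) ⊓ closure (![a, b, c] '' J) = closure (![a, b, c] '' (I ∩ J))) :
    IsStringCGroupRep ![a, b, c] := by
  refine ⟨fun i => ?_, ?_, fun i j hij => ?_, hinter⟩
  · fin_cases i <;> assumption
  · rwa [Matrix.range_cons, Matrix.range_cons, Matrix.range_cons_empty, Set.singleton_union,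
      Set.singleton_union]
  · fin_cases i <;> fin_cases j <;> simp at hij ⊢
    exact hac

end

theorem intersection_property_of_no_cyclic_normal_general (G : Type*) [Group G]
    (hG : ∀ H : Subgroup G, H.Normal → IsCyclic H → H = ⊥)
    (ρ₀ ρ₁ ρ₂ : G) (h₀ : orderOf ρ₀ = 2) (h₁ : orderOf ρ₁ = 2) (h₂ : orderOf ρ₂ = 2)
    (h₀₂ : orderOf (ρ₀ * ρ₂) = 2)
    (hgen : Subgroup.closure {ρ₀, ρ₁, ρ₂} = ⊤) :
    (∀ I J : Set (Fin 3),
      Subgroup.closure (![ρ₀, ρ₁, ρ₂] '' I) ⊓ Subgroup.closure (![ρ₀, ρ₁, ρ₂] '' J) =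
        Subgroup.closure (![ρ₀, ρ₁, ρ₂] '' (I ∩ J))) ∧
    IsStringCGroupRep ![ρ₀, ρ₁, ρ₂] := by
  have sq_eq_one {g : G} (hg : orderOf g = 2) : g ^ 2 = 1 := hg ▸ pow_orderOf_eq_one g
  have ne_one {g : G} (hg : orderOf g = 2) : g ≠ 1 := by rintro rfl; simp at hg
  have hcomm : Commute ρ₀ ρ₂ := commute_of_sq_eq_one (sq_eq_one h₀) (sq_eq_one h₂) (sq_eq_one h₀₂)
  have hgen' : closure {ρ₂, ρ₁, ρ₀} = ⊤ := by rwa [Set.insert_comm, Set.pair_comm, Set.insert_comm]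
  have hinter := closure_image_inf_closure_image_of_fin_three_s12 (sq_eq_one h₀) (sq_eq_one h₁)
    (sq_eq_one h₂) (ne_of_commute_of_closure_eq_top hG hgen (ne_one h₀) hcomm)
    (ne_of_commute_of_closure_eq_top hG hgen' (ne_one h₂) hcomm.symm).symm hcomm hgen
    (closure_pair_inf_closure_pair_le hG hgen (sq_eq_one h₀) (sq_eq_one h₁) (sq_eq_one h₂) hcomm)
  exact ⟨hinter, isStringCGroupRep_of_fin_three_s12 h₀ h₁ h₂ hgen hcomm hinter⟩

/-- If a finite group `G` with no non-trivial cyclic normal subgroup is generated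
by involutions `ρ₀, ρ₁, ρ₂` with `ρ₀ρ₂` of order two, then `(G; (ρ₀, ρ₁, ρ₂))`
satisfies the intersection property, hence is a string C-group representation of
rank three. -/
theorem intersection_property_of_no_cyclic_normal (G : Type*) [Group G] [Finite G]
    (hG : ∀ H : Subgroup G, H.Normal → IsCyclic H → H = ⊥)
    (ρ₀ ρ₁ ρ₂ : G) (h₀ : orderOf ρ₀ = 2) (h₁ : orderOf ρ₁ = 2) (h₂ : orderOf ρ₂ = 2)
    (h₀₂ : orderOf (ρ₀ * ρ₂) = 2)
    (hgen : Subgroup.closure {ρ₀, ρ₁, ρ₂} = ⊤) :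
    (∀ I J : Set (Fin 3),
      Subgroup.closure (![ρ₀, ρ₁, ρ₂] '' I) ⊓ Subgroup.closure (![ρ₀, ρ₁, ρ₂] '' J) =
        Subgroup.closure (![ρ₀, ρ₁, ρ₂] '' (I ∩ J))) ∧
    IsStringCGroupRep ![ρ₀, ρ₁, ρ₂] :=
  intersection_property_of_no_cyclic_normal_general G hG ρ₀ ρ₁ ρ₂ h₀ h₁ h₂ h₀₂ hgen
end
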